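/- For Rule 108 on a ring of size n, any configuration containing the cyclic factor 0011100 never reaches a fixed point under any sequential update mode: the middle cell alternates between 1 and 0 forever while the surrounding walls 001 and 100 never change. -/

import Mathlib

/-- Single-cell update: replace the state of cell `i` by the local rule applied
to its neighborhood on the ring `ZMod n`. -/
def eupdate (n : ℕ) (f : Bool → Bool → Bool → Bool) (x : ZMod n → Bool) (i : ZMod n) :
    ZMod n → Bool :=
  Function.update x i (f (x (i - 1)) (x i) (x (i + 1)))

/-- Synchronous (parallel) step. -/
def parStep (n : ℕ) (f : Bool → Bool → Bool → Bool) (x : ZMod n → Bool) : ZMod n → Bool :=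
  fun i => f (x (i - 1)) (x i) (x (i + 1))

/-- `x` is a fixed point of the parallel dynamics. -/
def IsFixedConfig (n : ℕ) (f : Bool → Bool → Bool → Bool) (x : ZMod n → Bool) : Prop :=
  ∀ i : ZMod n, f (x (i - 1)) (x i) (x (i + 1)) = x i

/-- One full sequential step under the sequential update mode `μ`
(a permutation of the cells): update cells one at a time in the order
`μ 0, μ 1, …, μ (n-1)`. -/
def seqStep (n : ℕ) (f : Bool → Bool → Bool → Bool) (μ : Fin n ≃ ZMod n)
    (x : ZMod n → Bool) : ZMod n → Bool :=
  (List.finRange n).foldl (fun y k => eupdate n f y (μ k)) x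

/-- One full sequential step under the descending order `(n-1, n-2, …, 0)`. -/
def seqStepDesc (n : ℕ) (f : Bool → Bool → Bool → Bool) (x : ZMod n → Bool) : ZMod n → Bool :=
  ((List.range n).reverse).foldl (fun y k => eupdate n f y (k : ZMod n)) x

/-- One full sequential step under the ascending order `(0, 1, …, n-1)`. -/
def seqStepAsc (n : ℕ) (f : Bool → Bool → Bool → Bool) (x : ZMod n → Bool) : ZMod n → Bool :=
  (List.range n).foldl (fun y k => eupdate n f y (k : ZMod n)) x

def rule108 : Bool → Bool → Bool → Bool
  | true, true, true => false
  | true, true, false => true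
  | true, false, true => true
  | true, false, false => false
  | false, true, true => true
  | false, true, false => true
  | false, false, true => false
  | false, false, false => false

/-!
Only the middle cell of `0011100` can ever change. Each of the six wall cells already agrees with
rule 108 applied to its neighbourhood, whatever the other cells hold, so an update anywhere keeps
the walls `001` and `100` in place. With both neighbours equal to `1`, rule 108 flips the middle
cell (`111 ↦ 0`, `101 ↦ 1`), so no configuration with these walls is fixed.
-/

section SequentialUpdate

variable {n : ℕ} {f : Bool → Bool → Bool → Bool}

theorem eupdate_apply_of_stable {y : ZMod n → Bool} {j k : ZMod n}
    (hk : f (y (k - 1)) (y k) (y (k + 1)) = y k) : eupdate n f y j k = y k := by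
  unfold eupdate
  rcases eq_or_ne k j with rfl | hkj
  · rw [Function.update_self, hk]
  · exact Function.update_of_ne hkj _ _

theorem seqStep_induction {P : (ZMod n → Bool) → Prop} (μ : Fin n ≃ ZMod n)
    (hP : ∀ y j, P y → P (eupdate n f y j)) {x : ZMod n → Bool} (hx : P x) :
    P (seqStep n f μ x) :=
  List.foldlRecOn _ _ hx fun y hy k _ => hP y (μ k) hy

end SequentialUpdate

theorem rule108_left_false_false (a : Bool) : rule108 a false false = false := by
  cases a <;> rfl

theorem rule108_false_false_right (b : Bool) : rule108 false false b = false := by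
  cases b <;> rfl

theorem rule108_false_true_right (b : Bool) : rule108 false true b = true := by
  cases b <;> rfl

theorem rule108_left_true_false (a : Bool) : rule108 a true false = true := by
  cases a <;> rfl

theorem rule108_true_mid_true (b : Bool) : rule108 true b true = !b := by
  cases b <;> rfl

def HasWalls (n : ℕ) (i : ZMod n) (y : ZMod n → Bool) : Prop :=
  y i = false ∧ y (i + 1) = false ∧ y (i + 2) = true ∧ y (i + 4) = true ∧
    y (i + 5) = false ∧ y (i + 6) = false

namespace HasWalls

variable {n : ℕ} {i : ZMod n} {y : ZMod n → Bool}

theorem eupdate (h : HasWalls n i y) (j : ZMod n) : HasWalls n i (eupdate n rule108 y j) := by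
  obtain ⟨h0, h1, h2, h4, h5, h6⟩ := h
  refine ⟨?_, ?_, ?_, ?_, ?_, ?_⟩ <;> rw [eupdate_apply_of_stable] <;> try assumption
  · rw [h0, h1, rule108_left_false_false]
  · rw [add_sub_cancel_right, show i + 1 + 1 = i + 2 by ring, h0, h1, rule108_false_false_right]
  · rw [show i + 2 - 1 = i + 1 by ring, h1, h2, rule108_false_true_right]
  · rw [show i + 4 + 1 = i + 5 by ring, h4, h5, rule108_left_true_false]
  · rw [show i + 5 + 1 = i + 6 by ring, h5, h6, rule108_left_false_false]
  · rw [show i + 6 - 1 = i + 5 by ring, h5, h6, rule108_false_false_right]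

theorem iterate_seqStep (h : HasWalls n i y) (μ : Fin n ≃ ZMod n) (t : ℕ) :
    HasWalls n i ((seqStep n rule108 μ)^[t] y) :=
  Function.Iterate.rec _ h (fun _ hy => seqStep_induction μ (fun _ j hz => hz.eupdate j) hy) t

theorem not_isFixedConfig (h : HasWalls n i y) : ¬ IsFixedConfig n rule108 y := by
  intro hfix
  have hmid := hfix (i + 3)
  rw [show i + 3 - 1 = i + 2 by ring, show i + 3 + 1 = i + 4 by ring, h.2.2.1, h.2.2.2.1,
    rule108_true_mid_true] at hmid
  exact Bool.not_ne_self _ hmid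

end HasWalls

theorem rule108_0011100_never_fixed_general (n : ℕ) (x : ZMod n → Bool)
    (i : ZMod n)
    (hx : x i = false ∧ x (i + 1) = false ∧ x (i + 2) = true ∧ x (i + 3) = true ∧
          x (i + 4) = true ∧ x (i + 5) = false ∧ x (i + 6) = false)
    (μ : Fin n ≃ ZMod n) :
    ∀ t : ℕ, ¬ IsFixedConfig n rule108 ((seqStep n rule108 μ)^[t] x) := by
  obtain ⟨h0, h1, h2, -, h4, h5, h6⟩ := hx
  have walls : HasWalls n i x := ⟨h0, h1, h2, h4, h5, h6⟩
  exact fun t => (walls.iterate_seqStep μ t).not_isFixedConfig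

theorem rule108_0011100_never_fixed (n : ℕ) (hn : 0 < n) (x : ZMod n → Bool)
    (i : ZMod n)
    (hx : x i = false ∧ x (i + 1) = false ∧ x (i + 2) = true ∧ x (i + 3) = true ∧
          x (i + 4) = true ∧ x (i + 5) = false ∧ x (i + 6) = false)
    (μ : Fin n ≃ ZMod n) :
    ∀ t : ℕ, ¬ IsFixedConfig n rule108 ((seqStep n rule108 μ)^[t] x) :=
  rule108_0011100_never_fixed_general n x i hx μ
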